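/- There exist constants A₁ > 0 and A₂ > 0 such that for all positive integers x ≥ 2, P·x − A₁·√x/log x ≤ F(x) ≤ P·x + A₂·√x. -/

import Mathlib

open Finset Real

/-- `F x` is the cardinality of the set `{n : 1 ≤ n ≤ x, ⌊x/n⌋ prime}`. -/
def F (x : ℕ) : ℕ := ((Finset.Icc 1 x).filter (fun n => Nat.Prime (x / n))).card

/-- `P = Σ_{p prime} 1/(p(p+1))`. -/
noncomputable def P : ℝ := ∑' p : Nat.Primes, 1 / ((p : ℝ) * ((p : ℝ) + 1))

/-!
The `n` with `⌊x/n⌋ = k` form the interval `(⌊x/(k+1)⌋, ⌊x/k⌋]`, so grouping by `p = ⌊x/n⌋`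
gives `F x = ∑_{p ≤ x prime} (⌊x/p⌋ - ⌊x/(p+1)⌋)`. For `p ≤ y ≈ √x` each term is
`x/(p(p+1)) + O(1)`, so these primes contribute `x ∑_{p ≤ y} 1/(p(p+1)) + O(π(y))`, while the
`n` with `⌊x/n⌋ > y` number only `⌊x/(y+1)⌋ ≤ √x`; this gives the upper bound. For the lower
bound, partial summation against Chebyshev's `π(n) ≤ 8n / log n` bounds the tail
`∑_{p > y} 1/(p(p+1))` by `O(1/(y log y))`, and `π(y) = O(√x / log x)` as well.
-/

theorem Nat.div_eq_iff_mem_Ioc {x n k : ℕ} (hn : 0 < n) (hk : 0 < k) :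
    x / n = k ↔ n ∈ Ioc (x / (k + 1)) (x / k) := by
  have hle := Nat.le_div_iff_mul_le (x := k) (y := x) hn
  have hlt := Nat.div_lt_iff_lt_mul (x := x) (y := k + 1) hn
  rw [mem_Ioc, Nat.div_lt_iff_lt_mul (by omega), Nat.le_div_iff_mul_le hk, mul_comm n, mul_comm n]
  omega

theorem filter_div_eq_eq_Ioc (x : ℕ) {k : ℕ} (hk : 0 < k) :
    {n ∈ Icc 1 x | x / n = k} = Ioc (x / (k + 1)) (x / k) := by
  ext n
  simp only [mem_filter, mem_Icc]
  constructor
  · rintro ⟨⟨hn, -⟩, h⟩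
    exact (Nat.div_eq_iff_mem_Ioc hn hk).1 h
  · intro h
    have hn : 0 < n := Nat.zero_lt_of_lt (mem_Ioc.1 h).1
    exact ⟨⟨hn, (mem_Ioc.1 h).2.trans (Nat.div_le_self x k)⟩,
      (Nat.div_eq_iff_mem_Ioc hn hk).2 h⟩

theorem card_filter_div_mem (x : ℕ) {s : Finset ℕ} (hs : ∀ k ∈ s, 0 < k) :
    #{n ∈ Icc 1 x | x / n ∈ s} = ∑ k ∈ s, (x / k - x / (k + 1)) := by
  rw [card_eq_sum_card_fiberwise (s := {n ∈ Icc 1 x | x / n ∈ s}) (t := s) (f := (x / ·))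
    fun n hn => (mem_filter.1 hn).2]
  refine sum_congr rfl fun k hk => ?_
  rw [filter_filter, ← Nat.card_Ioc, ← filter_div_eq_eq_Ioc x (hs k hk)]
  congr 1
  exact filter_congr fun n _ => ⟨And.right, fun h => ⟨h ▸ hk, h⟩⟩

theorem filter_lt_div_eq_Icc (x y : ℕ) : {n ∈ Icc 1 x | y < x / n} = Icc 1 (x / (y + 1)) := by
  ext n
  simp only [mem_filter, mem_Icc, and_assoc]
  refine and_congr_right fun hn => ?_
  rw [← Nat.add_one_le_iff, Nat.le_div_iff_mul_le hn, Nat.le_div_iff_mul_le (Nat.succ_pos y),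
    mul_comm]
  exact ⟨And.right, fun h => ⟨(Nat.le_mul_of_pos_right n (Nat.succ_pos y)).trans h, h⟩⟩

theorem card_filter_lt_div (x y : ℕ) : #{n ∈ Icc 1 x | y < x / n} = x / (y + 1) := by
  rw [filter_lt_div_eq_Icc, Nat.card_Icc, Nat.add_sub_cancel]

theorem sum_primesLE_le_F (x y : ℕ) : ∑ p ∈ Nat.primesLE y, (x / p - x / (p + 1)) ≤ F x := by
  rw [← card_filter_div_mem x fun p hp => (Nat.prime_of_mem_primesLE hp).pos]
  exact card_le_card (monotone_filter_right _ fun n _ h => Nat.prime_of_mem_primesLE h)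

theorem F_le_sum_primesLE_add (x y : ℕ) :
    F x ≤ ∑ p ∈ Nat.primesLE y, (x / p - x / (p + 1)) + x / (y + 1) := calc
  F x ≤ #{n ∈ Icc 1 x | x / n ∈ Nat.primesLE y ∨ y < x / n} := by
    refine card_le_card (monotone_filter_right _ fun n _ h => ?_)
    rcases le_or_gt (x / n) y with hle | hlt
    · exact Or.inl (Nat.mem_primesLE.2 ⟨hle, h⟩)
    · exact Or.inr hlt
  _ ≤ #{n ∈ Icc 1 x | x / n ∈ Nat.primesLE y} + #{n ∈ Icc 1 x | y < x / n} := by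
    rw [filter_or]; exact card_union_le _ _
  _ = _ := by
    rw [card_filter_div_mem x fun p hp => (Nat.prime_of_mem_primesLE hp).pos,
      card_filter_lt_div]

theorem abs_div_sub_div_succ_sub_le (x : ℕ) {k : ℕ} (hk : 0 < k) :
    |((x / k - x / (k + 1) : ℕ) : ℝ) - x * (1 / (k * (k + 1)))| ≤ 1 := by
  have hk' : (0 : ℝ) < k := by exact_mod_cast hk
  have hfloor (m : ℕ) : (x : ℝ) / m - 1 < (x / m : ℕ) := by
    rw [← Nat.floor_div_eq_div (K := ℝ)]; exact Nat.sub_one_lt_floor _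
  have hk1 := hfloor k
  have hk2 := hfloor (k + 1)
  have hk3 : ((x / k : ℕ) : ℝ) ≤ x / k := Nat.cast_div_le
  have hk4 : ((x / (k + 1) : ℕ) : ℝ) ≤ x / (k + 1 : ℕ) := Nat.cast_div_le
  have hmain : (x : ℝ) * (1 / (k * (k + 1))) = x / k - x / (k + 1) := by field_simp; ring
  push_cast at hk2 hk4
  rw [Nat.cast_sub (Nat.div_le_div_left k.le_succ hk), hmain, abs_sub_le_iff]
  constructor <;> linarith

theorem abs_sum_primesLE_sub_le (x y : ℕ) :
    |((∑ p ∈ Nat.primesLE y, (x / p - x / (p + 1)) : ℕ) : ℝ)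
      - x * ∑ p ∈ Nat.primesLE y, 1 / ((p : ℝ) * (p + 1))| ≤ y.primeCounting := by
  rw [Nat.cast_sum, mul_sum, ← sum_sub_distrib, ← Nat.primesLE_card_eq_primeCounting]
  refine (abs_sum_le_sum_abs _ _).trans ?_
  simpa using sum_le_card_nsmul _ _ 1 fun p hp =>
    abs_div_sub_div_succ_sub_le x (Nat.prime_of_mem_primesLE hp).pos

theorem primeCounting_le_self (n : ℕ) : n.primeCounting ≤ n := by
  rw [← Nat.primesLE_card_eq_primeCounting, Nat.primesLE_eq_filter_Icc_one]
  exact (card_filter_le _ _).trans (Nat.card_Icc 1 n).le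

theorem primeCounting_le_mul_div_log {n : ℕ} (hn : 2 ≤ n) :
    (n.primeCounting : ℝ) ≤ 8 * n / log n := by
  have hn' : (2 : ℝ) ≤ n := by exact_mod_cast hn
  have hlog : 0 < log n := log_pos (by linarith)
  have hcheb := Chebyshev.pi_le_log4_mul_div (x := n) (by linarith)
  rw [Nat.floor_natCast, log_sqrt (by positivity)] at hcheb
  have hlog4 : log 4 ≤ 3 := by linarith [log_le_sub_one_of_pos (show (0 : ℝ) < 4 by norm_num)]
  have hsqrt : √n * log n ≤ 2 * n := by
    have h := log_le_sub_one_of_pos (show 0 < √(n : ℝ) by positivity)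
    rw [log_sqrt (by positivity)] at h
    nlinarith [mul_self_sqrt (show (0 : ℝ) ≤ n by positivity), sqrt_nonneg (n : ℝ)]
  rw [le_div_iff₀ hlog]
  calc (n.primeCounting : ℝ) * log n ≤ (log 4 * n / (log n / 2) + √n) * log n := by gcongr
    _ = 2 * log 4 * n + √n * log n := by field_simp
    _ ≤ 8 * n := by nlinarith

-- Abel summation; with `A N = ∑ k ∈ Ioc y N, a k ≤ c N`, the step `N → N + 1` costs
-- `A N * (1/(N(N+1)) - 1/((N+1)(N+2))) ≤ 2c/((N+1)(N+2)) = 2c/(N+1) - 2c/(N+2)`.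
theorem sum_Ioc_div_mul_succ_le_sub_add {a : ℕ → ℝ} {c : ℝ} {y : ℕ} (hy : 0 < y)
    (hA : ∀ n, y ≤ n → ∑ k ∈ Ioc y n, a k ≤ c * n) {N : ℕ} (hN : y ≤ N) :
    ∑ n ∈ Ioc y N, a n / (n * (n + 1))
      ≤ 2 * c / (y + 1) - 2 * c / (N + 1) + (∑ k ∈ Ioc y N, a k) / (N * (N + 1)) := by
  induction N, hN using Nat.le_induction with
  | base => simp
  | succ N hN ih =>
    have hN' : (0 : ℝ) < N := by exact_mod_cast hy.trans_le hN
    have hcount : 2 * (∑ k ∈ Ioc y N, a k) / (N * (N + 1) * (N + 2))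
        ≤ 2 * c / ((N + 1) * (N + 2)) := by
      rw [div_le_div_iff₀ (by positivity) (by positivity)]
      have hAN := hA N hN
      have hpos : 0 < (N + 1 : ℝ) * (N + 2) := by positivity
      nlinarith
    rw [sum_Ioc_succ_top hN, sum_Ioc_succ_top hN]
    push_cast
    have e1 : (∑ k ∈ Ioc y N, a k) / (N * (N + 1))
        = 2 * (∑ k ∈ Ioc y N, a k) / (N * (N + 1) * (N + 2))
          + (∑ k ∈ Ioc y N, a k) / ((N + 1) * (N + 1 + 1)) := by
      field_simp; ring
    have e2 : 2 * c / (N + 1) = 2 * c / ((N + 1) * (N + 2)) + 2 * c / (N + 1 + 1) := by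
      field_simp; ring
    rw [add_div _ (a (N + 1))]
    linarith

theorem sum_Ioc_div_mul_succ_le {a : ℕ → ℝ} {c : ℝ} {y : ℕ} (hy : 0 < y)
    (hA : ∀ n, y ≤ n → ∑ k ∈ Ioc y n, a k ≤ c * n) (N : ℕ) :
    ∑ n ∈ Ioc y N, a n / (n * (n + 1)) ≤ 2 * c / (y + 1) := by
  have hy' : (0 : ℝ) < y := by exact_mod_cast hy
  have hc : 0 ≤ c := by
    have h := hA y le_rfl
    rw [Ioc_self, sum_empty] at h
    exact nonneg_of_mul_nonneg_left h hy'
  rcases lt_or_ge N y with hN | hN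
  · rw [Ioc_eq_empty_of_le hN.le, sum_empty]; positivity
  have hN' : (0 : ℝ) < N := by exact_mod_cast hy.trans_le hN
  have hlast : (∑ k ∈ Ioc y N, a k) / (N * (N + 1)) ≤ 2 * c / (N + 1) := by
    rw [div_le_div_iff₀ (by positivity) (by positivity)]
    have hAN := mul_le_mul_of_nonneg_right (hA N hN) (by positivity : (0 : ℝ) ≤ N + 1)
    nlinarith [mul_nonneg (mul_nonneg hc hN'.le) (by positivity : (0 : ℝ) ≤ N + 1)]
  linarith [sum_Ioc_div_mul_succ_le_sub_add hy hA hN]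

theorem P_eq_tsum_ite_prime :
    P = ∑' n : ℕ, (if n.Prime then 1 else 0) / ((n : ℝ) * (n + 1)) := by
  refine (_root_.tsum_subtype {p : ℕ | p.Prime} fun n : ℕ => 1 / ((n : ℝ) * (n + 1))).trans ?_
  congr 1 with n
  simp only [Set.indicator_apply, Set.mem_ofPred_eq, ite_div, zero_div]

theorem summable_ite_prime_div :
    Summable fun n : ℕ => (if n.Prime then 1 else 0) / ((n : ℝ) * (n + 1)) := by
  refine .of_nonneg_of_le (fun n => by positivity) (fun n => ?_)
    (Real.summable_one_div_nat_pow.2 one_lt_two)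
  rcases n.eq_zero_or_pos with rfl | hn
  · simp
  have hn' : (1 : ℝ) ≤ n := by exact_mod_cast hn
  calc (if n.Prime then 1 else 0) / ((n : ℝ) * (n + 1)) ≤ 1 / ((n : ℝ) * (n + 1)) := by
        gcongr; split_ifs <;> norm_num
    _ ≤ 1 / (n : ℝ) ^ 2 := by gcongr; nlinarith

theorem sum_range_ite_prime_div (y : ℕ) :
    ∑ n ∈ range (y + 1), (if n.Prime then 1 else 0) / ((n : ℝ) * (n + 1))
      = ∑ p ∈ Nat.primesLE y, 1 / ((p : ℝ) * (p + 1)) := by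
  simp only [Nat.primesLE_eq_filter_range, sum_filter, ite_div, zero_div]

theorem sum_primesLE_le_P (y : ℕ) : ∑ p ∈ Nat.primesLE y, 1 / ((p : ℝ) * (p + 1)) ≤ P := by
  rw [← sum_range_ite_prime_div, P_eq_tsum_ite_prime]
  exact summable_ite_prime_div.sum_le_tsum _ fun n _ => by positivity

theorem sum_Ioc_ite_prime_le {y n : ℕ} (hy : 2 ≤ y) (hn : y ≤ n) :
    ∑ k ∈ Ioc y n, (if k.Prime then (1 : ℝ) else 0) ≤ 8 / log y * n := by
  have hlog : 0 < log y := log_pos (by exact_mod_cast hy)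
  rw [sum_boole]
  calc (#{k ∈ Ioc y n | k.Prime} : ℝ) ≤ n.primeCounting := by
        rw [← Nat.primesLE_card_eq_primeCounting, Nat.primesLE_eq_filter_Ioc_zero]
        exact_mod_cast card_le_card
          (filter_subset_filter _ (Ioc_subset_Ioc_left (Nat.zero_le y)))
    _ ≤ 8 * n / log n := primeCounting_le_mul_div_log (hy.trans hn)
    _ ≤ 8 * n / log y := by gcongr
    _ = 8 / log y * n := by ring

theorem P_le_sum_primesLE_add {y : ℕ} (hy : 2 ≤ y) :
    P ≤ ∑ p ∈ Nat.primesLE y, 1 / ((p : ℝ) * (p + 1)) + 16 / ((y + 1) * log y) := by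
  set b : ℕ → ℝ := fun n => (if n.Prime then 1 else 0) / ((n : ℝ) * (n + 1))
  rw [P_eq_tsum_ite_prime, ← summable_ite_prime_div.sum_add_tsum_nat_add (y + 1),
    sum_range_ite_prime_div]
  gcongr
  refine Real.tsum_le_of_sum_range_le (fun n => by positivity) fun N => ?_
  have hreindex : ∑ i ∈ range N, b (i + (y + 1)) = ∑ n ∈ Ioc y (y + N), b n := by
    rw [← Ico_add_one_add_one_eq_Ioc, sum_Ico_eq_sum_range, show y + N + 1 - (y + 1) = N by omega]
    exact sum_congr rfl fun i _ => by rw [add_comm]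
  calc ∑ i ∈ range N, b (i + (y + 1)) = ∑ n ∈ Ioc y (y + N), b n := hreindex
    _ ≤ 2 * (8 / log y) / (y + 1) :=
        sum_Ioc_div_mul_succ_le (by omega) (fun n hn => sum_Ioc_ite_prime_le hy hn) _
    _ = 16 / ((y + 1) * log y) := by field_simp; ring

theorem P_mul_sub_le_F {x y : ℕ} (hy : 2 ≤ y) (hxy : x < (y + 1) ^ 2) :
    P * x - 24 * (y + 1) / log y ≤ F x := by
  have hlog : 0 < log y := log_pos (by exact_mod_cast hy)
  have hmain := (abs_le.1 (abs_sum_primesLE_sub_le x y)).1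
  have htail := P_le_sum_primesLE_add hy
  have hcount := primeCounting_le_mul_div_log hy
  have hx : (x : ℝ) * (16 / ((y + 1) * log y)) ≤ 16 * (y + 1) / log y := by
    have : (x : ℝ) ≤ (y + 1) ^ 2 := by exact_mod_cast hxy.le
    rw [mul_div_assoc', div_le_div_iff₀ (by positivity) hlog]
    nlinarith
  have hsum : 8 * (y : ℝ) / log y + 16 * (y + 1) / log y ≤ 24 * (y + 1) / log y := by
    rw [← add_div]; gcongr; linarith
  have hF : ((∑ p ∈ Nat.primesLE y, (x / p - x / (p + 1)) : ℕ) : ℝ) ≤ F x := by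
    exact_mod_cast sum_primesLE_le_F x y
  nlinarith [mul_le_mul_of_nonneg_right htail (Nat.cast_nonneg x)]

theorem F_le_P_mul_add (x y : ℕ) : (F x : ℝ) ≤ P * x + y + x / (y + 1) := by
  have hF : (F x : ℝ)
      ≤ ((∑ p ∈ Nat.primesLE y, (x / p - x / (p + 1)) : ℕ) : ℝ) + (x / (y + 1) : ℕ) := by
    exact_mod_cast F_le_sum_primesLE_add x y
  have hmain := (abs_le.1 (abs_sum_primesLE_sub_le x y)).2
  have hP := mul_le_mul_of_nonneg_right (sum_primesLE_le_P y) (Nat.cast_nonneg x)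
  have hcount : (y.primeCounting : ℝ) ≤ y := by exact_mod_cast primeCounting_le_self y
  have hdiv : ((x / (y + 1) : ℕ) : ℝ) ≤ x / (y + 1) := by exact_mod_cast Nat.cast_div_le
  linarith

theorem log_le_four_mul_log {x y : ℕ} (hx : 0 < x) (hy : 2 ≤ y) (hxy : x < (y + 1) ^ 2) :
    log x ≤ 4 * log y := by
  have hy' : (2 : ℝ) ≤ y := by exact_mod_cast hy
  have hxy' : (x : ℝ) ≤ (y + 1) ^ 2 := by exact_mod_cast hxy.le
  have hsq : (y : ℝ) + 1 ≤ y ^ 2 := by nlinarith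
  calc log x ≤ log ((y : ℝ) ^ 4) := log_le_log (by exact_mod_cast hx)
        (hxy'.trans (by nlinarith [pow_le_pow_left₀ (by positivity) hsq 2]))
    _ = 4 * log y := by rw [log_pow]; norm_num

theorem P_mul_sub_le_F_of_two_le {x : ℕ} (hx : 2 ≤ x) : P * x - 288 * √x / log x ≤ F x := by
  -- `max 2` keeps `log y` positive for `x < 4`
  set y := max 2 (Nat.sqrt x)
  have hxy : x < (y + 1) ^ 2 := (Nat.lt_succ_sqrt' x).trans_le
    (Nat.pow_le_pow_left (Nat.succ_le_succ (le_max_right _ _)) 2)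
  have hlogx : 0 < log x := log_pos (by exact_mod_cast hx)
  have hy2 : 2 ≤ y := le_max_left _ _
  have hlogy : 0 < log y := log_pos (by exact_mod_cast hy2)
  have hsqrt : 1 ≤ √(x : ℝ) := one_le_sqrt.2 (by exact_mod_cast (one_le_two.trans hx))
  have hy : (y : ℝ) + 1 ≤ 3 * √x := by
    have : (y : ℝ) ≤ 2 * √x := by
      rw [show (y : ℝ) = max 2 (Nat.sqrt x : ℝ) by simp [y]]
      exact max_le (by linarith) (by linarith [Real.nat_sqrt_le_real_sqrt (a := x)])
    linarith
  have hlog := log_le_four_mul_log (by omega) hy2 hxy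
  refine le_trans ?_ (P_mul_sub_le_F hy2 hxy)
  gcongr P * x - ?_
  rw [div_le_div_iff₀ hlogy hlogx]
  nlinarith

theorem F_le_P_mul_add_sqrt (x : ℕ) : (F x : ℝ) ≤ P * x + 2 * √x := by
  have hsqrt := Real.real_sqrt_le_nat_sqrt_succ (a := x)
  have hdiv : (x : ℝ) / (Nat.sqrt x + 1) ≤ √x := by
    refine div_le_of_le_mul₀ (by positivity) (sqrt_nonneg _) ?_
    calc (x : ℝ) = √x * √x := (mul_self_sqrt (Nat.cast_nonneg x)).symm
      _ ≤ √x * (Nat.sqrt x + 1) := by gcongr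
  linarith [F_le_P_mul_add x (Nat.sqrt x), Real.nat_sqrt_le_real_sqrt (a := x)]

theorem F_elementary_bounds :
    ∃ A₁ > (0:ℝ), ∃ A₂ > (0:ℝ), ∀ x : ℕ, 2 ≤ x →
      P * x - A₁ * Real.sqrt x / Real.log x ≤ (F x : ℝ) ∧
      (F x : ℝ) ≤ P * x + A₂ * Real.sqrt x :=
  ⟨288, by norm_num, 2, by norm_num, fun x hx =>
    ⟨P_mul_sub_le_F_of_two_le hx, F_le_P_mul_add_sqrt x⟩⟩
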